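/- With Q_{r,j} := e_{r-j}(Y - {x_{r-j},...,x_r}) for j = 0,...,r-1 in the ring R = ℤ[x_1,...,x_r] ⊗ ℤ[y_1,...,y_r]^{S_r}, the sequence Q_{r,0}, Q_{r,1}, ..., Q_{r,r-1} is a regular sequence in R. -/

import Mathlib

open MvPolynomial

/-- The elementary symmetric polynomial `e_n` in the set of variables `s`. -/
noncomputable def eOn {σ : Type} [DecidableEq σ] (s : Finset σ) (n : ℕ) : MvPolynomial σ ℤ :=
  ∑ t ∈ Finset.powersetCard n s, ∏ i ∈ t, X i

/-- The complete homogeneous symmetric polynomial `h_n` in the set of variables `s`. -/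
noncomputable def hOn {σ : Type} [DecidableEq σ] (s : Finset σ) (n : ℕ) : MvPolynomial σ ℤ :=
  ∑ m ∈ s.sym n, (m.1.map X).prod

/-- The ring `R = ℤ[x_1,…,x_r] ⊗ ℤ[y_1,…,y_r]^{S_r}`, presented as the polynomial ring in the
`x_i` (the `Sum.inl` variables) and the elementary symmetric polynomials `e_1(Y),…,e_r(Y)`
(the `Sum.inr` variables, via the fundamental theorem of symmetric polynomials).
`Evar r n` is the element corresponding to `e_n(Y)` (with `e_0(Y) = 1`). -/
noncomputable def Evar (r n : ℕ) : MvPolynomial (Fin r ⊕ Fin r) ℤ :=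
  if _h0 : n = 0 then 1 else if h : n ≤ r then X (Sum.inr ⟨n - 1, by omega⟩) else 0

/-- `QE r j` corresponds to `Q_{r,j} = e_{r-j}(Y - {x_{r-j},…,x_r})
= Σ_i (-1)^i e_{r-j-i}(Y) h_i(x_{r-j},…,x_r)`. -/
noncomputable def QE (r j : ℕ) : MvPolynomial (Fin r ⊕ Fin r) ℤ :=
  ∑ i ∈ Finset.range (r - j + 1),
    (-1) ^ i * Evar r (r - j - i) *
      hOn ((Finset.univ.filter fun t : Fin r => r - j - 1 ≤ (t : ℕ)).image Sum.inl) i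

/-! In the presentation of `R` by the variables `x_i` and `e_k = e_k(Y)`, the element
`Q_{r,r-1-k}` is `e_{k+1}` plus a polynomial in the `x_i` and `e_1, …, e_k`. So the substitution
`x_i ↦ x_i`, `e_{k+1} ↦ Q_{r,r-1-k}` is triangular: it is surjective by induction on `k`, hence an
automorphism, since a surjective endomorphism of a Noetherian ring is injective. It maps the
variables `e_r, e_{r-1}, …, e_1` to `Q_{r,0}, Q_{r,1}, …, Q_{r,r-1}`, and distinct variables of a
polynomial ring form a regular sequence. -/

open Function in
theorem IsNoetherianRing.injective_of_surjective_endomorphism {A : Type*} [CommRing A]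
    [IsNoetherianRing A] (φ : A →+* A) (hφ : Surjective φ) : Injective φ := by
  obtain ⟨n, hn⟩ := monotone_stabilizes_iff_noetherian.mpr (inferInstance : IsNoetherian A A)
    ⟨fun n => RingHom.ker (φ ^ n), fun m n hmn x hx => by
      simp only [RingHom.mem_ker, RingHom.coe_pow] at hx ⊢
      rw [← Nat.sub_add_cancel hmn, iterate_add_apply, hx, iterate_map_zero]⟩
  have hker : RingHom.ker (φ ^ (n + 1)) = RingHom.ker (φ ^ n) := (hn (n + 1) n.le_succ).symm
  refine (injective_iff_map_eq_zero φ).mpr fun x hx => ?_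
  obtain ⟨y, rfl⟩ := hφ.iterate n x
  have hy : y ∈ RingHom.ker (φ ^ (n + 1)) := by
    rwa [RingHom.mem_ker, RingHom.coe_pow, iterate_succ_apply']
  rwa [hker, RingHom.mem_ker, RingHom.coe_pow] at hy

namespace MvPolynomial

theorem mem_ideal_span_X_image_of_X_mul_mem {σ R : Type*} [CommSemiring R] {S : Set σ} {v : σ}
    (hv : v ∉ S) {f : MvPolynomial σ R} (h : X v * f ∈ Ideal.span (X '' S)) :
    f ∈ Ideal.span (X '' S) := by
  classical
  rw [mem_ideal_span_X_image] at h ⊢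
  intro m hm
  obtain ⟨i, hi, hne⟩ := h _ (by rw [support_X_mul]; exact Finset.mem_map_of_mem _ hm)
  have hvi : v ≠ i := fun e => hv (e ▸ hi)
  exact ⟨i, hi, by simpa [Finsupp.single_apply, hvi] using hne⟩

variable {σ R : Type*} [CommRing R]

theorem aeval_surjective_of_triangular (ρ : σ → ℕ) (p : σ → MvPolynomial σ R)
    (hp : ∀ v, p v - X v ∈ Algebra.adjoin R (X '' {w | ρ w < ρ v})) :
    Function.Surjective (aeval (R := R) p) := by
  have hX : ∀ n, ∀ v, ρ v = n → X v ∈ (aeval (R := R) p).range := by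
    intro n
    induction n using Nat.strong_induction_on with
    | _ n ih =>
      rintro v rfl
      have hlow : Algebra.adjoin R (X '' {w | ρ w < ρ v}) ≤ (aeval (R := R) p).range :=
        Algebra.adjoin_le (by rintro _ ⟨w, hw, rfl⟩; exact ih _ hw w rfl)
      simpa using Subalgebra.sub_mem _ (AlgHom.mem_range_self _ (X v)) (hlow (hp v))
  rw [← AlgHom.range_eq_top, eq_top_iff, ← adjoin_range_X, Algebra.adjoin_le_iff]
  rintro _ ⟨v, rfl⟩
  exact hX _ v rfl

theorem aeval_bijective_of_triangular [Finite σ] [IsNoetherianRing R] (ρ : σ → ℕ)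
    (p : σ → MvPolynomial σ R)
    (hp : ∀ v, p v - X v ∈ Algebra.adjoin R (X '' {w | ρ w < ρ v})) :
    Function.Bijective (aeval (R := R) p) :=
  have hs := aeval_surjective_of_triangular ρ p hp
  ⟨IsNoetherianRing.injective_of_surjective_endomorphism (aeval p).toRingHom hs, hs⟩

end MvPolynomial

section QE

variable {r : ℕ}

def varLevel : Fin r ⊕ Fin r → ℕ := Sum.elim (fun _ => 0) fun k => k + 1

lemma hOn_zero {σ : Type} [DecidableEq σ] (s : Finset σ) : hOn s 0 = 1 := by
  rw [hOn, Finset.sym_zero, Finset.sum_singleton]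
  rfl

lemma hOn_mem_adjoin {σ : Type} [DecidableEq σ] {s : Finset σ} {T : Set σ} (hs : ↑s ⊆ T)
    (n : ℕ) : hOn s n ∈ Algebra.adjoin ℤ (X '' T) := by
  refine Subalgebra.sum_mem _ fun m hm => Subalgebra.multiset_prod_mem _ fun x hx => ?_
  obtain ⟨v, hv, rfl⟩ := Multiset.mem_map.mp hx
  exact Algebra.subset_adjoin ⟨v, hs (Finset.mem_sym_iff.mp hm v hv), rfl⟩

lemma Evar_succ (k : Fin r) : Evar r (k + 1) = X (Sum.inr k) := by
  simp [Evar, k.isLt]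

lemma Evar_mem_adjoin {n m : ℕ} (h : n < m) :
    Evar r n ∈ Algebra.adjoin ℤ (X '' {w | varLevel w < m}) := by
  unfold Evar
  split_ifs
  · exact Subalgebra.one_mem _
  · exact Algebra.subset_adjoin ⟨_, show n - 1 + 1 < m by omega, rfl⟩
  · exact Subalgebra.zero_mem _

lemma QE_sub_X_mem_adjoin (k : Fin r) :
    QE r (r - 1 - k) - X (Sum.inr k) ∈ Algebra.adjoin ℤ (X '' {w | varLevel w < k + 1}) := by
  have hk : r - (r - 1 - k) = k + 1 := by omega
  rw [QE, hk, Finset.sum_range_succ', pow_zero, one_mul, Nat.sub_zero, Evar_succ, hOn_zero,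
    mul_one, add_sub_cancel_right]
  refine Subalgebra.sum_mem _ fun i _ => Subalgebra.mul_mem _
    (Subalgebra.mul_mem _ ?_ (Evar_mem_adjoin ?_)) (hOn_mem_adjoin ?_ _)
  · exact Subalgebra.pow_mem _ (Subalgebra.neg_mem _ (Subalgebra.one_mem _)) _
  · omega
  · intro w hw
    obtain ⟨t, -, rfl⟩ := Finset.mem_image.mp hw
    simp [varLevel]

noncomputable def qSubst (r : ℕ) : Fin r ⊕ Fin r → MvPolynomial (Fin r ⊕ Fin r) ℤ :=
  Sum.elim (fun i => X (Sum.inl i)) fun k => QE r (r - 1 - k)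

lemma qSubst_sub_X_mem_adjoin (v : Fin r ⊕ Fin r) :
    qSubst r v - X v ∈ Algebra.adjoin ℤ (X '' {w | varLevel w < varLevel v}) := by
  rcases v with i | k
  · simp [qSubst]
  · exact QE_sub_X_mem_adjoin k

noncomputable def qSubstEquiv (r : ℕ) :
    MvPolynomial (Fin r ⊕ Fin r) ℤ ≃ₐ[ℤ] MvPolynomial (Fin r ⊕ Fin r) ℤ :=
  AlgEquiv.ofBijective _
    (aeval_bijective_of_triangular varLevel (qSubst r) qSubst_sub_X_mem_adjoin)

lemma qSubstEquiv_X_inr {j : ℕ} (hj : j < r) :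
    qSubstEquiv r (X (Sum.inr ⟨r - 1 - j, by omega⟩)) = QE r j := by
  simp only [qSubstEquiv, AlgEquiv.ofBijective_apply, aeval_X, qSubst, Sum.elim_inr]
  congr 1
  omega

end QE

/-- `Q_{r,0}, Q_{r,1}, …, Q_{r,r-1}` is a regular sequence in
`R = ℤ[x_1,…,x_r] ⊗ ℤ[y_1,…,y_r]^{S_r}`: each `Q_{r,j}` is a nonzerodivisor modulo the ideal
generated by the previous ones. -/
theorem QE_regular_sequence (r j : ℕ) (hj : j < r)
    (f : MvPolynomial (Fin r ⊕ Fin r) ℤ)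
    (hf : QE r j * f ∈ Ideal.span ((fun i => QE r i) '' {i | i < j})) :
    f ∈ Ideal.span ((fun i => QE r i) '' {i | i < j}) := by
  let e := (qSubstEquiv r).toRingEquiv
  let κ : ℕ → Fin r ⊕ Fin r := fun i => Sum.inr ⟨r - 1 - i, by omega⟩
  have hQ : (fun i => QE r i) '' {i | i < j} = e '' (X '' (κ '' {i | i < j})) := by
    simp only [Set.image_image]
    exact Set.image_congr fun i hi => (qSubstEquiv_X_inr (lt_trans hi hj)).symm
  have hκ : κ j ∉ κ '' {i | i < j} := by
    rintro ⟨i, hi, he⟩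
    have hi : i < j := hi
    simp only [κ, Sum.inr.injEq, Fin.mk.injEq] at he
    omega
  rw [hQ, ← Ideal.map_span] at hf ⊢
  obtain ⟨g, rfl⟩ := e.surjective f
  have hQj : QE r j = e (X (κ j)) := (qSubstEquiv_X_inr hj).symm
  rw [hQj, ← map_mul, Ideal.apply_mem_of_equiv_iff] at hf
  exact Ideal.apply_mem_of_equiv_iff.mpr (mem_ideal_span_X_image_of_X_mul_mem hκ hf)
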